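/- arXiv:1802.10199 — 2 statements merged into one kernel-verified Lean document; each statement's English description precedes it below -/
import Mathlib

section
/- Let δ: ℕ → ℝ_{≥0} be a sequence with δ(0) ≤ n, and suppose for every round r exactly one of the following holds: (a) δ(r+1) ≤ (4/5)·δ(r) (a shrinking round), or (b) δ(r+1) ≤ 2·δ(r) (a golden round of type 2). Then among any rounds where δ(r) ≥ 2 holds, the number of rounds with δ(r) ≥ 2 is at most log_{5/4}(n) plus 5 times the number of golden rounds of type 2. -/
/-- `S` are the shrinking rounds and `G` the golden rounds of type 2. -/
theorem stmt10 (n : ℕ) (hn : 2 ≤ n) (δ : ℕ → ℝ) (hδpos : ∀ r, 0 ≤ δ r)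
    (hδ0 : δ 0 ≤ (n : ℝ)) (R : ℕ) (S G : Finset ℕ)
    (hpart : S ∪ G = Finset.range R) (hdisj : Disjoint S G)
    (hS : ∀ r ∈ S, δ (r + 1) ≤ (4 / 5) * δ r)
    (hG : ∀ r ∈ G, δ (r + 1) ≤ 2 * δ r) :
    ((@Finset.filter _ (fun r => (2 : ℝ) ≤ δ r) (Classical.decPred _)
        (Finset.range R)).card : ℝ)
      ≤ Real.logb (5 / 4) (n : ℝ) + 5 * (G.card : ℝ) := by
  classical
  have hb : (1 : ℝ) < 5 / 4 := by norm_num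
  set Φ : ℕ → ℝ := fun r => Real.logb (5 / 4) (max (δ r) 1) with hΦdef
  have hΦnn : ∀ r, 0 ≤ Φ r := fun r => Real.logb_nonneg hb (le_max_right _ _)
  have hmaxpos : ∀ r, (0 : ℝ) < max (δ r) 1 := fun r =>
    lt_of_lt_of_le one_pos (le_max_right _ _)
  set c : ℝ := Real.logb (5 / 4) 2 with hcdef
  have hc4 : c ≤ 4 := by
    rw [hcdef, Real.logb_le_iff_le_rpow hb (by norm_num)]
    rw [show ((4 : ℝ)) = ((4 : ℕ) : ℝ) by norm_num, Real.rpow_natCast]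
    norm_num
  have key : ∀ m, m ≤ R →
      Φ m + (((S ∩ Finset.range m).filter (fun r => (2 : ℝ) ≤ δ r)).card : ℝ)
        ≤ Φ 0 + c * (((G ∩ Finset.range m).card : ℝ)) := by
    intro m
    induction m with
    | zero => simp
    | succ m ih =>
      intro hm
      have hmR : m < R := Nat.lt_of_succ_le hm
      have ih' := ih (Nat.le_of_succ_le hm)
      have hmr : m ∈ S ∪ G := by rw [hpart]; exact Finset.mem_range.mpr hmR
      have hrange : Finset.range (m + 1) = insert m (Finset.range m) :=
        Finset.range_add_one
      have hmnot : m ∉ Finset.range m := by simp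
      rcases Finset.mem_union.mp hmr with hmS | hmG
      · -- shrinking round
        have hmG' : m ∉ G := fun h => (Finset.disjoint_left.mp hdisj hmS) h
        have hGeq : G ∩ Finset.range (m + 1) = G ∩ Finset.range m := by
          rw [hrange, Finset.inter_insert_of_notMem hmG']
        have hSeq : S ∩ Finset.range (m + 1) = insert m (S ∩ Finset.range m) := by
          rw [hrange, Finset.inter_insert_of_mem hmS]
        have hshrink := hS m hmS
        by_cases h2 : (2 : ℝ) ≤ δ m
        · -- useful shrink: Φ drops by 1
          have hstep : Φ (m + 1) + 1 ≤ Φ m := by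
            have h1 : max (δ (m + 1)) 1 ≤ (4 / 5) * δ m := by
              refine max_le hshrink ?_
              linarith
            have h2' : Real.logb (5 / 4) (max (δ (m + 1)) 1)
                ≤ Real.logb (5 / 4) ((4 / 5) * δ m) :=
              Real.logb_le_logb_of_le hb (hmaxpos _) h1
            have h3 : Real.logb (5 / 4) ((4 / 5) * δ m)
                = -1 + Real.logb (5 / 4) (δ m) := by
              rw [Real.logb_mul (by norm_num) (by linarith)]
              congr 1
              rw [show ((4 : ℝ) / 5) = (5 / 4 : ℝ)⁻¹ by norm_num,
                Real.logb_inv, Real.logb_self_eq_one hb]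
            have h4 : max (δ m) 1 = δ m := max_eq_left (by linarith)
            simp only [hΦdef]
            rw [h4]
            linarith
          have hcard : ((S ∩ Finset.range (m + 1)).filter
              (fun r => (2 : ℝ) ≤ δ r)).card
              = ((S ∩ Finset.range m).filter (fun r => (2 : ℝ) ≤ δ r)).card + 1 := by
            rw [hSeq, Finset.filter_insert, if_pos h2,
              Finset.card_insert_of_notMem (by simp [hmnot])]
          rw [hGeq, hcard]
          push_cast
          linarith
        · -- δ m < 2 : Φ non-increasing
          have hstep : Φ (m + 1) ≤ Φ m := by
            refine Real.logb_le_logb_of_le hb (hmaxpos _) ?_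
            refine max_le (le_trans hshrink ?_) (le_max_right _ _)
            have := hδpos m
            nlinarith [le_max_left (δ m) 1]
          have hcard : ((S ∩ Finset.range (m + 1)).filter
              (fun r => (2 : ℝ) ≤ δ r)).card
              = ((S ∩ Finset.range m).filter (fun r => (2 : ℝ) ≤ δ r)).card := by
            rw [hSeq, Finset.filter_insert, if_neg h2]
          rw [hGeq, hcard]
          linarith
      · -- golden round
        have hmS' : m ∉ S := fun h => (Finset.disjoint_left.mp hdisj h) hmG
        have hSeq : S ∩ Finset.range (m + 1) = S ∩ Finset.range m := by
          rw [hrange, Finset.inter_insert_of_notMem hmS']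
        have hGeq : G ∩ Finset.range (m + 1) = insert m (G ∩ Finset.range m) := by
          rw [hrange, Finset.inter_insert_of_mem hmG]
        have hstep : Φ (m + 1) ≤ Φ m + c := by
          have h1 : max (δ (m + 1)) 1 ≤ 2 * max (δ m) 1 := by
            refine max_le (le_trans (hG m hmG) ?_) ?_
            · nlinarith [le_max_left (δ m) 1]
            · nlinarith [le_max_right (δ m) 1]
          have h2' : Real.logb (5 / 4) (max (δ (m + 1)) 1)
              ≤ Real.logb (5 / 4) (2 * max (δ m) 1) :=
            Real.logb_le_logb_of_le hb (hmaxpos _) h1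
          have h3 : Real.logb (5 / 4) (2 * max (δ m) 1)
              = c + Real.logb (5 / 4) (max (δ m) 1) := by
            rw [Real.logb_mul (by norm_num) (ne_of_gt (hmaxpos m))]
          simp only [hΦdef] at *
          linarith
        rw [hSeq, hGeq, Finset.card_insert_of_notMem (by simp [hmnot])]
        push_cast
        linarith
  have hkeyR := key R le_rfl
  have hSsub : S ∩ Finset.range R = S := by
    rw [Finset.inter_eq_left, ← hpart]
    exact Finset.subset_union_left
  have hGsub : G ∩ Finset.range R = G := by
    rw [Finset.inter_eq_left, ← hpart]
    exact Finset.subset_union_right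
  rw [hSsub, hGsub] at hkeyR
  -- split the filter over range R
  have hsplit : (Finset.filter (fun r => (2 : ℝ) ≤ δ r) (Finset.range R)).card
      ≤ (Finset.filter (fun r => (2 : ℝ) ≤ δ r) S).card + G.card := by
    rw [← hpart, Finset.filter_union]
    refine le_trans (Finset.card_union_le _ _) ?_
    exact Nat.add_le_add le_rfl (Finset.card_filter_le _ _)
  have hΦ0 : Φ 0 ≤ Real.logb (5 / 4) (n : ℝ) := by
    refine Real.logb_le_logb_of_le hb (hmaxpos 0) ?_
    refine max_le hδ0 ?_
    exact_mod_cast le_trans (by norm_num) hn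
  have hcnn : 0 ≤ c := Real.logb_nonneg hb (by norm_num)
  have hG0 : (0 : ℝ) ≤ (G.card : ℝ) := by positivity
  have hΦR := hΦnn R
  have hcast : ((Finset.filter (fun r => (2 : ℝ) ≤ δ r) (Finset.range R)).card : ℝ)
      ≤ ((Finset.filter (fun r => (2 : ℝ) ≤ δ r) S).card : ℝ) + (G.card : ℝ) := by
    exact_mod_cast hsplit
  have : ((@Finset.filter _ (fun r => (2 : ℝ) ≤ δ r) (Classical.decPred _)
        (Finset.range R)).card : ℝ)
      = ((Finset.filter (fun r => (2 : ℝ) ≤ δ r) (Finset.range R)).card : ℝ) := by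
    congr 1
  rw [this]
  nlinarith [mul_le_mul_of_nonneg_right hc4 hG0]
end

section
/- Consider the following random process modeling one round of the basic coloring algorithm at a node v: v has palette P_v with |P_v| = p ≥ 2, a set Z ⊆ P_v of forbidden colors with |Z| ≤ p/4, each uncolored neighbor u ∈ U has a palette P_u with |P_u| ≥ 2, |U| ≤ p, and all of v and the u ∈ U independently pick uniform colors from their palettes. Then the probability that v's color c satisfies c ∉ Z, Σ_{u ∈ U, c ∈ P_u} 1/|P_u| ≤ 2, and no u ∈ U picks c, is at least 1/64. -/
open Finset

lemma exp_aux (x : ℝ) (h0 : 0 ≤ x) (h1 : x ≤ 1/2) :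
    Real.exp (-(x * Real.log 4)) ≤ 1 - x := by
  have hE : Real.exp (-(Real.log 4 / 2)) = 1/2 := by
    have hlog : Real.log 4 = 2 * Real.log 2 := by
      rw [show (4:ℝ) = 2^2 by norm_num, Real.log_pow]; push_cast; ring
    rw [hlog, show -(2 * Real.log 2 / 2) = -Real.log 2 by ring,
      Real.exp_neg, Real.exp_log (by norm_num)]
    norm_num
  have hcx := convexOn_exp.2 (Set.mem_univ (0:ℝ)) (Set.mem_univ (-(Real.log 4/2)))
      (show (0:ℝ) ≤ 1 - 2*x by linarith) (show (0:ℝ) ≤ 2*x by linarith)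
      (show (1 - 2*x) + 2*x = 1 by ring)
  simp only [smul_eq_mul, mul_zero, zero_add, Real.exp_zero] at hcx
  rw [show (2*x) * (-(Real.log 4/2)) = -(x * Real.log 4) by ring, hE] at hcx
  linarith

lemma prod_aux {U : Type} [Fintype U] (q e : U → ℝ)
    (hq : ∀ u, 2 ≤ q u) (he0 : ∀ u, 0 ≤ e u) (he1 : ∀ u, e u ≤ 1)
    (hsum : ∑ u, e u / q u ≤ 2) :
    (1:ℝ)/16 ≤ ∏ u, (1 - e u / q u) := by
  have hx : ∀ u : U, 0 ≤ e u / q u ∧ e u / q u ≤ 1/2 := by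
    intro u
    have hq2 := hq u
    constructor
    · exact div_nonneg (he0 u) (by linarith)
    · rw [div_le_iff₀ (by linarith)]
      nlinarith [he1 u]
  have h16 : Real.exp (-(2 * Real.log 4)) = 1/16 := by
    rw [show -(2*Real.log 4) = -(Real.log 4 + Real.log 4) by ring, Real.exp_neg,
      Real.exp_add, Real.exp_log (by norm_num : (0:ℝ) < 4)]
    norm_num
  calc (1:ℝ)/16 = Real.exp (-(2 * Real.log 4)) := h16.symm
    _ ≤ Real.exp (-((∑ u, e u / q u) * Real.log 4)) := by
        apply Real.exp_le_exp.mpr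
        have := mul_le_mul_of_nonneg_right hsum (Real.log_nonneg (by norm_num : (1:ℝ) ≤ 4))
        linarith
    _ = ∏ u, Real.exp (-(e u / q u * Real.log 4)) := by
        rw [← Real.exp_sum]
        congr 1
        rw [Finset.sum_mul, neg_eq_iff_eq_neg, ← Finset.sum_neg_distrib]
        simp
    _ ≤ ∏ u, (1 - e u / q u) := by
        apply Finset.prod_le_prod (fun u _ => (Real.exp_pos _).le)
        exact fun u _ => exp_aux _ (hx u).1 (hx u).2

/-- One round of the basic coloring algorithm at node `v`: `v` picks a uniform color from its
palette `Pv` and every uncolored neighbor `u ∈ U` independently picks a uniform color from its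
palette `P u`; the sample space is the uniform product
`{x // x ∈ Pv} × ((u : U) → {x // x ∈ P u})`. The event is that `v`'s color is good
(not forbidden and of weight at most `2`) and no neighbor picks it. -/
theorem stmt17 {U : Type} [Fintype U] [DecidableEq U] (Pv : Finset ℕ) (Z : Finset ℕ)
    (P : U → Finset ℕ) (hp : 2 ≤ Pv.card) (hZ : Z ⊆ Pv) (hZc : (Z.card : ℝ) ≤ Pv.card / 4)
    (hP : ∀ u, 2 ≤ (P u).card) (hU : Fintype.card U ≤ Pv.card) :
    (1 : ℝ) / 64 ≤
      ((@Finset.filter ({x // x ∈ Pv} × ((u : U) → {x // x ∈ P u}))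
          (fun ω => (ω.1 : ℕ) ∉ Z
            ∧ (∑ u ∈ Finset.univ.filter (fun u => (ω.1 : ℕ) ∈ P u), (1 : ℝ) / (P u).card) ≤ 2
            ∧ ∀ u, (ω.2 u : ℕ) ≠ (ω.1 : ℕ))
          (Classical.decPred _) Finset.univ).card : ℝ)
        / (Fintype.card ({x // x ∈ Pv} × ((u : U) → {x // x ∈ P u}))) := by
  classical
  set W : ℕ → ℝ := fun c => ∑ u ∈ Finset.univ.filter (fun u => c ∈ P u), (1:ℝ)/(P u).card
    with hWdef
  set Good : ℕ → Prop := fun c => c ∉ Z ∧ W c ≤ 2 with hGooddef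
  set n : ℕ → ℕ := fun c => ∏ u, ((P u).card - if c ∈ P u then 1 else 0) with hndef
  -- count of tuples avoiding c
  have key : ∀ c : ℕ,
      (∑ b : (u : U) → {x // x ∈ P u}, if (∀ u, ((b u : ℕ) ≠ c)) then (1:ℕ) else 0) = n c := by
    intro c
    rw [← Finset.card_filter]
    have hpi : Finset.univ.filter (fun b : (u : U) → {x // x ∈ P u} => ∀ u, ((b u : ℕ) ≠ c))
        = Fintype.piFinset (fun u => Finset.univ.filter (fun x : {x // x ∈ P u} => (x:ℕ) ≠ c)) := by
      ext b
      simp [Fintype.mem_piFinset]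
    rw [hpi, Fintype.card_piFinset]
    refine Finset.prod_congr rfl fun u _ => ?_
    have h1 : (Finset.univ.filter (fun x : {x // x ∈ P u} => (x:ℕ) = c)).card
        = if c ∈ P u then 1 else 0 := by
      by_cases h : c ∈ P u
      · rw [if_pos h, Finset.card_eq_one]
        exact ⟨⟨c, h⟩, by ext x; simp [Subtype.ext_iff]⟩
      · rw [if_neg h, Finset.card_eq_zero]
        ext x
        simp only [Finset.mem_filter, Finset.mem_univ, true_and, Finset.notMem_empty, iff_false]
        intro hx; exact h (hx ▸ x.2)
    have h2 := Finset.card_filter_add_card_filter_not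
      (s := (Finset.univ : Finset {x // x ∈ P u})) (p := fun x => (x:ℕ) = c)
    have h3 : (Finset.univ : Finset {x // x ∈ P u}).card = (P u).card := by
      rw [Finset.card_univ, Fintype.card_coe]
    have h4 : (Finset.univ.filter (fun x : {x // x ∈ P u} => ¬ (x:ℕ) = c))
        = (Finset.univ.filter (fun x : {x // x ∈ P u} => (x:ℕ) ≠ c)) := rfl
    rw [h1, h3, h4] at h2
    omega
  -- counting the event
  set S := (@Finset.filter ({x // x ∈ Pv} × ((u : U) → {x // x ∈ P u}))
          (fun ω => (ω.1 : ℕ) ∉ Z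
            ∧ (∑ u ∈ Finset.univ.filter (fun u => (ω.1 : ℕ) ∈ P u), (1 : ℝ) / (P u).card) ≤ 2
            ∧ ∀ u, (ω.2 u : ℕ) ≠ (ω.1 : ℕ))
          (Classical.decPred _) Finset.univ) with hSdef
  have hS : S.card = ∑ c : {x // x ∈ Pv}, if Good (c:ℕ) then n (c:ℕ) else 0 := by
    rw [hSdef, Finset.card_filter, Fintype.sum_prod_type]
    refine Finset.sum_congr rfl fun c _ => ?_
    by_cases h : Good (c:ℕ)
    · rw [if_pos h, ← key (c:ℕ)]
      refine Finset.sum_congr rfl fun b _ => ?_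
      by_cases hb : ∀ u, ((b u : ℕ) ≠ (c:ℕ))
      · rw [if_pos hb, if_pos ⟨h.1, h.2, hb⟩]
      · rw [if_neg hb, if_neg (fun hh => hb hh.2.2)]
    · rw [if_neg h]
      refine Finset.sum_eq_zero fun b _ => ?_
      rw [if_neg]
      intro hh
      exact h ⟨hh.1, hh.2.1⟩
  -- product lower bound for good colors
  set Q : ℝ := ∏ u, ((P u).card : ℝ) with hQdef
  have hQpos : 0 < Q := Finset.prod_pos fun u _ => by
    have := hP u; positivity
  have hprodlb : ∀ c : ℕ, W c ≤ 2 → (1:ℝ)/16 * Q ≤ (n c : ℝ) := by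
    intro c hWc
    have hcast : ((n c : ℕ) : ℝ) = ∏ u, (((P u).card : ℝ) - if c ∈ P u then 1 else 0) := by
      rw [hndef]
      push_cast [Nat.cast_prod]
      refine Finset.prod_congr rfl fun u _ => ?_
      have h1 : (if c ∈ P u then 1 else 0) ≤ (P u).card := by
        have := hP u; split <;> omega
      rw [Nat.cast_sub h1]
      split <;> simp
    rw [hcast]
    have hfac : ∀ u : U, (((P u).card : ℝ) - if c ∈ P u then 1 else 0)
        = ((P u).card : ℝ) * (1 - (if c ∈ P u then (1:ℝ) else 0) / ((P u).card : ℝ)) := by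
      intro u
      have hq0 : ((P u).card : ℝ) ≠ 0 := by
        have := hP u; positivity
      field_simp
    rw [Finset.prod_congr rfl fun u _ => hfac u, Finset.prod_mul_distrib, ← hQdef]
    rw [mul_comm ((1:ℝ)/16) Q]
    apply mul_le_mul_of_nonneg_left _ hQpos.le
    apply prod_aux (fun u => ((P u).card : ℝ)) (fun u => if c ∈ P u then (1:ℝ) else 0)
    · intro u; exact_mod_cast hP u
    · intro u; split <;> norm_num
    · intro u; split <;> norm_num
    · calc ∑ u : U, (if c ∈ P u then (1:ℝ) else 0) / ((P u).card : ℝ)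
          = ∑ u : U, (if c ∈ P u then (1:ℝ)/((P u).card:ℝ) else 0) := by
            refine Finset.sum_congr rfl fun u _ => ?_
            split <;> simp
        _ = W c := (Finset.sum_filter _ _).symm
        _ ≤ 2 := hWc
  -- number of good colors
  have hWnonneg : ∀ c, 0 ≤ W c := by
    intro c
    apply Finset.sum_nonneg
    intro u _
    positivity
  have htotal : ∑ c ∈ Pv, W c ≤ (Fintype.card U : ℝ) := by
    have : ∑ c ∈ Pv, W c = ∑ u : U, ∑ c ∈ Pv, (if c ∈ P u then (1:ℝ)/((P u).card:ℝ) else 0) := by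
      rw [Finset.sum_comm]
      refine Finset.sum_congr rfl fun c _ => Finset.sum_filter _ _
    rw [this]
    rw [Fintype.card_eq_sum_ones]
    push_cast
    apply Finset.sum_le_sum
    intro u _
    rw [← Finset.sum_filter, Finset.sum_const, nsmul_eq_mul]
    have hcard : ((Pv.filter (fun c => c ∈ P u)).card : ℝ) ≤ ((P u).card : ℝ) := by
      exact_mod_cast Finset.card_le_card (fun x hx => (Finset.mem_filter.mp hx).2)
    have hq : (0:ℝ) < ((P u).card : ℝ) := by have := hP u; positivity
    rw [mul_one_div, div_le_one hq]
    exact hcard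
  have hbad : ((Pv.filter (fun c => ¬ W c ≤ 2)).card : ℝ) ≤ (Pv.card : ℝ) / 2 := by
    have h1 : 2 * ((Pv.filter (fun c => ¬ W c ≤ 2)).card : ℝ)
        ≤ ∑ c ∈ Pv.filter (fun c => ¬ W c ≤ 2), W c := by
      rw [mul_comm]
      calc ((Pv.filter (fun c => ¬ W c ≤ 2)).card : ℝ) * 2
          = ∑ _c ∈ Pv.filter (fun c => ¬ W c ≤ 2), (2:ℝ) := by
            rw [Finset.sum_const, nsmul_eq_mul]
        _ ≤ _ := Finset.sum_le_sum fun c hc => by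
            have := (Finset.mem_filter.mp hc).2
            linarith
    have h2 : ∑ c ∈ Pv.filter (fun c => ¬ W c ≤ 2), W c ≤ ∑ c ∈ Pv, W c :=
      Finset.sum_le_sum_of_subset_of_nonneg (Finset.filter_subset _ _)
        (fun c hc _ => hWnonneg c)
    have h3 : (Fintype.card U : ℝ) ≤ (Pv.card : ℝ) := by exact_mod_cast hU
    linarith
  have hgood : (Pv.card : ℝ) / 4 ≤ ((Pv.filter Good).card : ℝ) := by
    have hsplit := Finset.card_filter_add_card_filter_not (s := Pv) (p := Good)
    have hsubset : Pv.filter (fun c => ¬ Good c) ⊆ Z ∪ Pv.filter (fun c => ¬ W c ≤ 2) := by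
      intro c hc
      obtain ⟨hcPv, hcn⟩ := Finset.mem_filter.mp hc
      rw [hGooddef] at hcn
      rw [Finset.mem_union]
      by_cases hz : c ∈ Z
      · exact Or.inl hz
      · exact Or.inr (Finset.mem_filter.mpr ⟨hcPv, fun hw => hcn ⟨hz, hw⟩⟩)
    have hcardle : ((Pv.filter (fun c => ¬ Good c)).card : ℝ)
        ≤ (Z.card : ℝ) + ((Pv.filter (fun c => ¬ W c ≤ 2)).card : ℝ) := by
      calc ((Pv.filter (fun c => ¬ Good c)).card : ℝ)
          ≤ ((Z ∪ Pv.filter (fun c => ¬ W c ≤ 2)).card : ℝ) := by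
            exact_mod_cast Finset.card_le_card hsubset
        _ ≤ _ := by exact_mod_cast Finset.card_union_le _ _
    have := hsplit
    have h4 : ((Pv.filter Good).card : ℝ) + ((Pv.filter (fun c => ¬ Good c)).card : ℝ)
        = (Pv.card : ℝ) := by exact_mod_cast hsplit
    linarith
  -- put everything together
  have hS' : S.card = ∑ c ∈ Pv, if Good c then n c else 0 := by
    rw [hS, Finset.univ_eq_attach, Finset.sum_attach Pv (fun c => if Good c then n c else 0)]
  have hcount : (Pv.card : ℝ) / 4 * ((1:ℝ)/16 * Q) ≤ (S.card : ℝ) := by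
    rw [hS', Nat.cast_sum]
    calc (Pv.card : ℝ)/4 * ((1:ℝ)/16*Q)
        ≤ ((Pv.filter Good).card : ℝ) * ((1:ℝ)/16*Q) :=
          mul_le_mul_of_nonneg_right hgood (mul_nonneg (by norm_num) hQpos.le)
      _ = ∑ _c ∈ Pv.filter Good, ((1:ℝ)/16*Q) := by rw [Finset.sum_const, nsmul_eq_mul]
      _ = ∑ c ∈ Pv, (if Good c then (1:ℝ)/16*Q else 0) := by rw [Finset.sum_filter]
      _ ≤ ∑ c ∈ Pv, (((if Good c then n c else 0 : ℕ) : ℝ)) := by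
          refine Finset.sum_le_sum fun c _ => ?_
          by_cases h : Good c
          · rw [if_pos h, if_pos h]
            exact hprodlb c h.2
          · rw [if_neg h, if_neg h]
            simp
  have hΩ : (Fintype.card ({x // x ∈ Pv} × ((u : U) → {x // x ∈ P u})) : ℝ)
      = (Pv.card : ℝ) * Q := by
    rw [Fintype.card_prod, Fintype.card_pi]
    push_cast
    rw [Fintype.card_coe]
    congr 1
    refine Finset.prod_congr rfl fun u _ => ?_
    rw [Fintype.card_coe]
  rw [hΩ]
  have hppos : (0:ℝ) < (Pv.card : ℝ) := by
    have h2 : (2:ℝ) ≤ (Pv.card : ℝ) := by exact_mod_cast hp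
    linarith
  rw [le_div_iff₀ (mul_pos hppos hQpos)]
  nlinarith [hcount, hQpos, hppos]
end
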